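/- Let cohA, cohB be reflexive symmetric relations on types M, N, both carrying the discrete topology, and let ℓ ⊆ M × N satisfy the linear-trace conditions: for all (a,b) ∈ ℓ and (a',b') ∈ ℓ, (cohA a a' → cohB b b') and (cohA a a' ∧ a ≠ a' → cohB b b' ∧ b ≠ b'). Let f, f' : (ℕ → Bool) → M and g, g' : (ℕ → Bool) → N be continuous with (f w, g w) ∈ ℓ and (f' w, g' w) ∈ ℓ for all w. Then: (f = f' ∨ scohFlag cohA f f') → (g = g' ∨ scohFlag cohB g g'), and scohFlag cohA f f' → scohFlag cohB g g'. (flag ℓ is the trace of a linear map from flag A to flag B.) -/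
import Mathlib


/-- Lexicographic (strict) order on the Cantor space `ℕ → Bool`. -/
def lexLt (w w' : ℕ → Bool) : Prop :=
  ∃ n : ℕ, (∀ k < n, w k = w' k) ∧ w n = false ∧ w' n = true

lemma lexLt_trichotomy (w w' : ℕ → Bool) (h : w ≠ w') : lexLt w w' ∨ lexLt w' w := by
  classical
  have hne : ∃ n, w n ≠ w' n := by
    by_contra hc; push_neg at hc; exact h (funext hc)
  set n := Nat.find hne with hn
  have h1 : w n ≠ w' n := Nat.find_spec hne
  have h2 : ∀ k < n, w k = w' k := fun k hk => by
    have := Nat.find_min hne hk; simpa using this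
  cases hw : w n <;> cases hw' : w' n
  · exact absurd (hw.trans hw'.symm) h1
  · exact Or.inl ⟨n, h2, hw, hw'⟩
  · exact Or.inr ⟨n, fun k hk => (h2 k hk).symm, hw', hw⟩
  · exact absurd (hw.trans hw'.symm) h1

lemma exists_lex_min {S : Set (ℕ → Bool)} (hS : IsClosed S) (hne : S.Nonempty) :
    ∃ m ∈ S, ∀ v, lexLt v m → v ∉ S := by
  classical
  let T : ℕ → Set (ℕ → Bool) := fun n => Nat.rec S
    (fun k Tk => if h : ∃ x ∈ Tk, x k = false then {x ∈ Tk | x k = false}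
      else {x ∈ Tk | x k = true}) n
  have hTpos : ∀ k, (∃ x ∈ T k, x k = false) → T (k+1) = {x ∈ T k | x k = false} :=
    fun k h => dif_pos h
  have hTneg : ∀ k, ¬(∃ x ∈ T k, x k = false) → T (k+1) = {x ∈ T k | x k = true} :=
    fun k h => dif_neg h
  have hsub : ∀ k, T (k+1) ⊆ T k := by
    intro k
    rcases Classical.em (∃ x ∈ T k, x k = false) with h | h
    · rw [hTpos k h]; exact fun x hx => hx.1
    · rw [hTneg k h]; exact fun x hx => hx.1
  have hTne : ∀ n, (T n).Nonempty := by
    intro n; induction n with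
    | zero => exact hne
    | succ k ih =>
      rcases Classical.em (∃ x ∈ T k, x k = false) with h | h
      · rw [hTpos k h]; obtain ⟨x, hx, hxk⟩ := h; exact ⟨x, hx, hxk⟩
      · obtain ⟨x, hx⟩ := ih
        rw [hTneg k h]
        refine ⟨x, hx, ?_⟩
        cases hxk : x k
        · exact absurd ⟨x, hx, hxk⟩ h
        · rfl
  have hsub' : ∀ m n, m ≤ n → T n ⊆ T m := by
    intro m n hmn
    induction n with
    | zero => interval_cases m; exact fun x hx => hx
    | succ k ih =>
      rcases Nat.lt_or_ge m (k+1) with h | h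
      · exact ((hsub k).trans (ih (Nat.lt_succ_iff.mp h)))
      · have : m = k + 1 := le_antisymm hmn h
        subst this; exact fun x hx => hx
  have hagree : ∀ k, ∀ x ∈ T (k+1), ∀ y ∈ T (k+1), x k = y k := by
    intro k x hx y hy
    rcases Classical.em (∃ x ∈ T k, x k = false) with h | h
    · rw [hTpos k h] at hx hy; exact hx.2.trans hy.2.symm
    · rw [hTneg k h] at hx hy; exact hx.2.trans hy.2.symm
  let xseq : ℕ → (ℕ → Bool) := fun n => (hTne (n+1)).choose
  have hxseqT : ∀ n, xseq n ∈ T (n+1) := fun n => (hTne (n+1)).choose_spec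
  let u : ℕ → Bool := fun n => xseq n n
  have hxu : ∀ n k, k ≤ n → xseq n k = u k := by
    intro n k hk
    exact hagree k (xseq n) (hsub' (k+1) (n+1) (Nat.succ_le_succ hk) (hxseqT n))
      (xseq k) (hxseqT k)
  have hxS : ∀ n, xseq n ∈ S := fun n => hsub' 0 (n+1) (Nat.zero_le _) (hxseqT n)
  have humem : u ∈ S := by
    have ht : Filter.Tendsto xseq Filter.atTop (nhds u) := by
      rw [tendsto_pi_nhds]
      intro k
      refine Filter.Tendsto.congr' ?_ tendsto_const_nhds
      filter_upwards [Filter.eventually_ge_atTop k] with n hn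
      exact (hxu n k hn).symm
    exact hS.mem_of_tendsto ht (Filter.Eventually.of_forall hxS)
  refine ⟨u, humem, ?_⟩
  rintro v ⟨n, hvk, hvn, hun⟩ hvS
  have hstep : ∀ k, v ∈ T k → v k = u k → v ∈ T (k+1) := by
    intro k hvT hvu
    have hc := hxseqT k
    rcases Classical.em (∃ x ∈ T k, x k = false) with hb | hb
    · rw [hTpos k hb] at hc ⊢
      exact ⟨hvT, hvu.trans hc.2⟩
    · rw [hTneg k hb] at hc ⊢
      exact ⟨hvT, hvu.trans hc.2⟩
  have hvT : ∀ m, m ≤ n → v ∈ T m := by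
    intro m
    induction m with
    | zero => intro _; exact hvS
    | succ k ih =>
      intro hk
      exact hstep k (ih (Nat.le_of_succ_le hk)) (hvk k (Nat.lt_of_succ_le hk))
  have hb : ∃ x ∈ T n, x n = false := ⟨v, hvT n le_rfl, hvn⟩
  have hc := hxseqT n
  rw [hTpos n hb] at hc
  have : u n = false := hc.2
  rw [this] at hun; exact Bool.false_ne_true hun

/-- Flag strict coherence of two functions from the Cantor space to a web. -/
def scohFlag {M : Type*} (coh : M → M → Prop) (f g : (ℕ → Bool) → M) : Prop :=
  ∃ w, (coh (f w) (g w) ∧ f w ≠ g w) ∧ ∀ v, lexLt v w → f v = g v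

/-- `flag ℓ` is the trace of a linear map from `flag A` to `flag B`. -/
theorem flag_of_linear_trace_is_linear {M N : Type*}
    [TopologicalSpace M] [DiscreteTopology M] [TopologicalSpace N] [DiscreteTopology N]
    (cohA : M → M → Prop) (cohB : N → N → Prop)
    (hArefl : ∀ x, cohA x x) (hAsymm : ∀ x y, cohA x y → cohA y x)
    (hBrefl : ∀ x, cohB x x) (hBsymm : ∀ x y, cohB x y → cohB y x)
    (ℓ : Set (M × N))
    (hℓ : ∀ p ∈ ℓ, ∀ q ∈ ℓ,
      (cohA p.1 q.1 → cohB p.2 q.2) ∧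
        (cohA p.1 q.1 ∧ p.1 ≠ q.1 → cohB p.2 q.2 ∧ p.2 ≠ q.2))
    (f f' : (ℕ → Bool) → M) (g g' : (ℕ → Bool) → N)
    (hf : Continuous f) (hf' : Continuous f') (hg : Continuous g) (hg' : Continuous g')
    (hfg : ∀ w, (f w, g w) ∈ ℓ) (hfg' : ∀ w, (f' w, g' w) ∈ ℓ) :
    ((f = f' ∨ scohFlag cohA f f') → (g = g' ∨ scohFlag cohB g g')) ∧
      (scohFlag cohA f f' → scohFlag cohB g g') := by
  classical
  have hSclosed : IsClosed {v : ℕ → Bool | g v ≠ g' v} := by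
    have hopen : IsOpen {v : ℕ → Bool | g v = g' v} := by
      have hd : IsOpen {p : N × N | p.1 = p.2} := isOpen_discrete _
      exact hd.preimage (hg.prodMk hg')
    have hcl := hopen.isClosed_compl
    have hset : {v : ℕ → Bool | g v ≠ g' v} = {v : ℕ → Bool | g v = g' v}ᶜ := rfl
    rw [hset]; exact hcl
  have main : ∀ w, g w ≠ g' w → cohA (f w) (f' w) → (∀ v, lexLt v w → f v = f' v) →
      scohFlag cohB g g' := by
    intro w hgw hAw hpre
    obtain ⟨m, hmS, hmmin⟩ := exists_lex_min hSclosed ⟨w, hgw⟩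
    have hgm : g m ≠ g' m := hmS
    have hAm : cohA (f m) (f' m) := by
      by_cases hmw : m = w
      · subst hmw; exact hAw
      · rcases lexLt_trichotomy m w hmw with h | h
        · rw [hpre m h]; exact hArefl _
        · exact absurd hgw (hmmin w h)
    refine ⟨m, ⟨(hℓ _ (hfg m) _ (hfg' m)).1 hAm, hgm⟩, ?_⟩
    intro v hv
    by_contra hne
    exact hmmin v hv hne
  have part2 : scohFlag cohA f f' → scohFlag cohB g g' := by
    rintro ⟨w, ⟨hA, hne⟩, hpre⟩
    have hgw : g w ≠ g' w := ((hℓ _ (hfg w) _ (hfg' w)).2 ⟨hA, hne⟩).2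
    exact main w hgw hA hpre
  refine ⟨?_, part2⟩
  rintro (heq | hsc)
  · by_cases hgeq : g = g'
    · exact Or.inl hgeq
    · right
      have hv : ∃ v, g v ≠ g' v := by
        by_contra hc; push_neg at hc; exact hgeq (funext hc)
      obtain ⟨w, hw⟩ := hv
      exact main w hw (by rw [heq]; exact hArefl _) (fun v _ => by rw [heq])
  · exact Or.inr (part2 hsc)
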